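/- arXiv:1901.02922 — 2 statements merged into one kernel-verified Lean document; each statement's English description precedes it below -/
import Mathlib

section
/- Let G = ℤ^m × F_n and let H ≤ G be a finitely generated subgroup with projection Hπ of rank at most 1 (i.e., Hπ is trivial or cyclic). Then H is inert in G: for every subgroup K ≤ G, r(H ∩ K) ≤ r(K). In particular di_G(H) = 1. -/
noncomputable section

def grank {G : Type*} [Group G] (H : Subgroup G) : ℕ∞ :=
  ⨅ (S : Set G) (_ : Subgroup.closure S = H), S.encard

def rrank {G : Type*} [Group G] (H : Subgroup G) : ℕ∞ := grank H - 1

def erat (a b : ℕ∞) : ENNReal := if a = 0 ∧ b = 0 then 1 else (a : ENNReal) / (b : ENNReal)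

def dc {G : Type*} [Group G] (H : Subgroup G) : ENNReal :=
  ⨆ (K : Subgroup G) (_ : K.FG ∧ H ≤ K), erat (rrank H) (rrank K)

def di {G : Type*} [Group G] (H : Subgroup G) : ENNReal :=
  ⨆ (K : Subgroup G) (_ : K.FG ∧ (H ⊓ K).FG), erat (rrank (H ⊓ K)) (rrank K)

/-!
For a subgroup `K ≤ ℤ^m × F` write `L_K = K ∩ ℤ^m`. Subgroups of `ℤ^m` have rank equal to their
`ℤ`-rank, so `r(K) ≥ rk L_K`; if moreover `Kπ ≠ 1`, then `Kπ` is free and maps onto `ℤ`, and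
correcting the `ℤ^m`-coordinate by a preimage of `1` gives a map `K → ℤ^m × ℤ` whose image
contains `L_K × ℤ`, so `r(K) ≥ rk L_K + 1`. On the other side, if `Jπ` is cyclic then
`r(J) ≤ r(J ∩ ker π) + 1 = rk L_J + 1`, with `r(J) = rk L_J` when `Jπ = 1`. As `L_J ≤ L_K` for
`J = H ∩ K`, these bounds give `r(H ∩ K) ≤ r(K)`.
-/

open Subgroup

section Generators

variable {G G' : Type*} [Group G] [Group G']

lemma grank_le_encard {H : Subgroup G} {S : Set G} (h : closure S = H) : grank H ≤ S.encard :=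
  iInf₂_le S h

lemma exists_closure_eq_encard_eq_grank (H : Subgroup G) :
    ∃ S : Set G, closure S = H ∧ S.encard = grank H := by
  have : Nonempty {S : Set G // closure S = H} := ⟨⟨H, closure_eq H⟩⟩
  obtain ⟨⟨S, hS⟩, h⟩ := ciInf_mem fun S : {S : Set G // closure S = H} => S.1.encard
  exact ⟨S, hS, h.trans (iInf_subtype' (p := fun S : Set G => closure S = H)
    (f := fun S _ => S.encard)).symm⟩

lemma grank_ne_top_of_fg {H : Subgroup G} (hH : H.FG) : grank H ≠ ⊤ := by
  obtain ⟨S, hS⟩ := hH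
  exact ne_top_of_le_ne_top (Set.encard_ne_top_iff.mpr S.finite_toSet) (grank_le_encard hS)

lemma grank_map_le (f : G →* G') (H : Subgroup G) : grank (H.map f) ≤ grank H := by
  obtain ⟨S, rfl, hS⟩ := exists_closure_eq_encard_eq_grank H
  calc grank ((closure S).map f) ≤ (f '' S).encard :=
        grank_le_encard (MonoidHom.map_closure f S).symm
    _ ≤ grank (closure S) := hS ▸ Set.encard_image_le f S

lemma grank_range_le {K : Subgroup G} (f : K →* G') : grank f.range ≤ grank K := by
  obtain ⟨S, rfl, hS⟩ := exists_closure_eq_encard_eq_grank K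
  rw [MonoidHom.range_eq_map, ← closure_preimage_eq_top S]
  refine (grank_map_le f _).trans ((grank_le_encard rfl).trans ?_)
  rw [← hS, Set.encard_preimage_of_injective_subset_range (subtype_injective _) (by simp)]

lemma isCyclic_of_grank_le_one {H : Subgroup G} (h : grank H ≤ 1) : IsCyclic H := by
  obtain ⟨S, rfl, hS⟩ := exists_closure_eq_encard_eq_grank H
  rcases Set.encard_le_one_iff_eq.mp (hS ▸ h) with rfl | ⟨u, rfl⟩
  · rw [Subgroup.closure_empty]; infer_instance
  · rw [← zpowers_eq_closure]; infer_instance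

lemma grank_le_grank_inf_ker_add_one (J : Subgroup G) (f : G →* G') (hJ : IsCyclic (J.map f)) :
    grank J ≤ grank (J ⊓ f.ker) + 1 := by
  obtain ⟨_, hx⟩ := (J.map f).isCyclic_iff_exists_zpowers_eq_top.mp hJ
  obtain ⟨x, hxJ, rfl⟩ := mem_map.mp (hx ▸ mem_zpowers _)
  obtain ⟨T, hT, hT'⟩ := exists_closure_eq_encard_eq_grank (J ⊓ f.ker)
  have hclosure : closure (insert x T) = J := by
    refine le_antisymm ((closure_le _).mpr (Set.insert_subset hxJ ?_)) fun j hj => ?_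
    · exact fun t ht => (hT ▸ subset_closure ht : t ∈ J ⊓ f.ker).1
    have hfj : f j ∈ (zpowers x).map f := by
      rw [MonoidHom.map_zpowers, hx]; exact mem_map_of_mem f hj
    obtain ⟨y, hy, hyj⟩ := mem_map.mp hfj
    have hyJ : y ∈ J := (zpowers_le.mpr hxJ : zpowers x ≤ J) hy
    have hker : y⁻¹ * j ∈ closure T := hT ▸ mem_inf.mpr ⟨mul_mem (inv_mem hyJ) hj, by simp [hyj]⟩
    have hy' : y ∈ closure (insert x T) :=
      (zpowers_le.mpr (subset_closure (Set.mem_insert x T)) : zpowers x ≤ _) hy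
    rw [← mul_inv_cancel_left y j]
    exact mul_mem hy' (closure_mono (Set.subset_insert x T) hker)
  calc grank J ≤ (insert x T).encard := grank_le_encard hclosure
    _ ≤ T.encard + 1 := Set.encard_insert_le T x
    _ = grank (J ⊓ f.ker) + 1 := by rw [hT']

end Generators

section Abelian

variable {V : Type*} [AddCommGroup V]

def intSubmodule : Subgroup (Multiplicative V) ≃o Submodule ℤ V :=
  Subgroup.toAddSubgroup'.trans AddSubgroup.toIntSubmodule

lemma mem_intSubmodule {B : Subgroup (Multiplicative V)} {v : V} :
    v ∈ intSubmodule B ↔ Multiplicative.ofAdd v ∈ B :=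
  Iff.rfl

lemma intSubmodule_closure (S : Set (Multiplicative V)) :
    intSubmodule (closure S) = Submodule.span ℤ (Multiplicative.toAdd '' S) := by
  apply Submodule.toAddSubgroup_injective
  rw [Submodule.span_int_eq_addSubgroupClosure, Equiv.image_eq_preimage_symm]
  exact toAddSubgroup'_closure S

lemma grank_eq_toENat_spanRank (B : Subgroup (Multiplicative V)) :
    grank B = (intSubmodule B).spanRank.toENat := by
  rw [Submodule.spanRank_toENat_eq_iInf_encard, grank]
  refine (Equiv.Set.congr Multiplicative.toAdd).iInf_congr fun S => ?_
  refine iInf_congr_Prop ?_ fun _ => Multiplicative.toAdd.injective.encard_image S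
  rw [Equiv.Set.congr_apply, ← intSubmodule_closure, intSubmodule.injective.eq_iff]

lemma grank_eq_finrank [Module.Free ℤ V] [Module.Finite ℤ V] (B : Subgroup (Multiplicative V)) :
    grank B = Module.finrank ℤ (intSubmodule B) := by
  rw [grank_eq_toENat_spanRank, ← Submodule.spanRank_top, ← Submodule.rank_eq_spanRank_of_free,
    ← Module.finrank_eq_rank, Cardinal.toENat_nat]

end Abelian

lemma IsFreeGroup.exists_surjective_multiplicative_int (F : Type*) [Group F] [IsFreeGroup F]
    [Nontrivial F] : ∃ χ : F →* Multiplicative ℤ, Function.Surjective χ := by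
  obtain ⟨i⟩ : Nonempty (IsFreeGroup.Generators F) := by
    by_contra h
    rw [not_nonempty_iff] at h
    exact not_subsingleton F (IsFreeGroup.toFreeGroup F).toEquiv.subsingleton
  refine ⟨IsFreeGroup.lift fun _ => Multiplicative.ofAdd 1,
    fun z => ⟨IsFreeGroup.of i ^ z.toAdd, ?_⟩⟩
  simp [← ofAdd_zsmul]

section Product

variable {V N : Type*} [AddCommGroup V] [Group N]

/-- The paper's `L_K = K ∩ ℤ^m`, as a lattice in `V`. -/
def abelianPart (K : Subgroup (Multiplicative V × N)) : Submodule ℤ V :=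
  intSubmodule (K.comap (MonoidHom.inl _ _))

lemma abelianPart_mono : Monotone (abelianPart (V := V) (N := N)) :=
  fun _ _ h => intSubmodule.monotone (comap_mono h)

lemma inf_ker_snd_eq_map_comap_inl (K : Subgroup (Multiplicative V × N)) :
    K ⊓ (MonoidHom.snd _ _).ker = (K.comap (MonoidHom.inl _ _)).map (MonoidHom.inl _ _) := by
  ext ⟨v, n⟩
  simp only [mem_inf, MonoidHom.mem_ker, MonoidHom.coe_snd, mem_map, mem_comap,
    MonoidHom.inl_apply, Prod.mk.injEq]
  constructor
  · rintro ⟨h, rfl⟩; exact ⟨v, h, rfl, rfl⟩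
  · rintro ⟨v, h, rfl, rfl⟩; exact ⟨h, rfl⟩

variable [Module.Free ℤ V] [Module.Finite ℤ V]

lemma grank_inf_ker_snd_le (J : Subgroup (Multiplicative V × N)) :
    grank (J ⊓ (MonoidHom.snd _ _).ker) ≤ Module.finrank ℤ (abelianPart J) := by
  rw [inf_ker_snd_eq_map_comap_inl, abelianPart, ← grank_eq_finrank]
  exact grank_map_le _ _

lemma finrank_abelianPart_le_grank (K : Subgroup (Multiplicative V × N)) :
    Module.finrank ℤ (abelianPart K) ≤ grank K := by
  have h : abelianPart K ≤ intSubmodule (K.map (MonoidHom.fst _ _)) :=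
    fun v hv => mem_map_of_mem (MonoidHom.fst _ _) hv
  calc (Module.finrank ℤ (abelianPart K) : ℕ∞)
      ≤ Module.finrank ℤ (intSubmodule (K.map (MonoidHom.fst _ _))) := by
        exact_mod_cast Submodule.finrank_mono h
    _ = grank (K.map (MonoidHom.fst _ _)) := (grank_eq_finrank _).symm
    _ ≤ grank K := grank_map_le _ _

end Product

lemma finrank_add_one_le_grank_of_prod_top_le {G V : Type*} [Group G] [AddCommGroup V]
    [Module.Free ℤ V] [Module.Finite ℤ V] {K : Subgroup G} (p : Submodule ℤ V)
    (ψ : K →* Multiplicative (V × ℤ)) (hψ : p.prod ⊤ ≤ intSubmodule ψ.range) :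
    Module.finrank ℤ p + 1 ≤ grank K := by
  let f : (p × ℤ) →ₗ[ℤ] intSubmodule ψ.range :=
    (p.subtype.prodMap LinearMap.id).codRestrict _ fun x => hψ ⟨x.1.2, trivial⟩
  have hf : Function.Injective f := fun x y h =>
    (p.injective_subtype.prodMap Function.injective_id) (congrArg Subtype.val h)
  calc (Module.finrank ℤ p : ℕ∞) + 1 = Module.finrank ℤ (p × ℤ) := by
        rw [Module.finrank_prod, Module.finrank_self]; push_cast; rfl
    _ ≤ Module.finrank ℤ (intSubmodule ψ.range) := by
        exact_mod_cast LinearMap.finrank_le_finrank_of_injective hf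
    _ = grank ψ.range := (grank_eq_finrank _).symm
    _ ≤ grank K := grank_range_le ψ

lemma finrank_abelianPart_add_one_le_grank {α V : Type*} [AddCommGroup V]
    [Module.Free ℤ V] [Module.Finite ℤ V] (K : Subgroup (Multiplicative V × FreeGroup α))
    (hK : K.map (MonoidHom.snd _ _) ≠ ⊥) :
    Module.finrank ℤ (abelianPart K) + 1 ≤ grank K := by
  have : Nontrivial (K.map (MonoidHom.snd _ _)) := (nontrivial_iff_ne_bot _).mpr hK
  obtain ⟨χ, hχ⟩ := IsFreeGroup.exists_surjective_multiplicative_int (K.map (MonoidHom.snd _ _))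
  set c : K →* Multiplicative ℤ := χ.comp ((MonoidHom.snd _ _).subgroupMap K)
  obtain ⟨k₀, hk₀⟩ : ∃ k₀, c k₀ = Multiplicative.ofAdd 1 :=
    hχ.comp ((MonoidHom.snd _ _).subgroupMap_surjective K) _
  -- `ψ k = (fst k - c k • fst k₀, c k)` fixes `abelianPart K × 0` and sends `k₀` to `(0, 1)`.
  let ψ : K →* Multiplicative (V × ℤ) :=
    (MulEquiv.prodMultiplicative V ℤ).symm.toMonoidHom.comp
      (((MonoidHom.fst _ _).comp K.subtype /
        (zpowersHom _ (k₀ : Multiplicative V × FreeGroup α).1).comp c).prod c)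
  refine finrank_add_one_le_grank_of_prod_top_le _ ψ ?_
  rintro ⟨v, z⟩ ⟨hv, -⟩
  have hcv : c ⟨(Multiplicative.ofAdd v, 1), hv⟩ = 1 :=
    (congrArg χ (Subtype.ext rfl : _ = (1 : K.map _))).trans (map_one χ)
  have h₁ : (v, 0) ∈ intSubmodule ψ.range := mem_intSubmodule.mpr
    ⟨⟨(Multiplicative.ofAdd v, 1), hv⟩, (by simp [ψ, hcv] : ψ _ = Multiplicative.ofAdd (v, 0))⟩
  have h₀ : ((0 : V), (1 : ℤ)) ∈ intSubmodule ψ.range :=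
    mem_intSubmodule.mpr ⟨k₀, (by simp [ψ, hk₀] : ψ _ = Multiplicative.ofAdd (0, 1))⟩
  simpa using add_mem h₁ (Submodule.smul_mem _ z h₀)

theorem grank_le_of_le_of_isCyclic_map_snd {α V : Type*} [AddCommGroup V] [Module.Free ℤ V]
    [Module.Finite ℤ V] {J K : Subgroup (Multiplicative V × FreeGroup α)} (hJK : J ≤ K)
    (hJ : IsCyclic (J.map (MonoidHom.snd _ _))) : grank J ≤ grank K := by
  set π := MonoidHom.snd (Multiplicative V) (FreeGroup α)
  have hL : (Module.finrank ℤ (abelianPart J) : ℕ∞) ≤ Module.finrank ℤ (abelianPart K) := by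
    exact_mod_cast Submodule.finrank_mono (abelianPart_mono hJK)
  by_cases hJ₀ : J.map π = ⊥
  · have hJker : J ⊓ π.ker = J := inf_eq_left.mpr ((Subgroup.map_eq_bot_iff _).mp hJ₀)
    calc grank J = grank (J ⊓ π.ker) := by rw [hJker]
      _ ≤ Module.finrank ℤ (abelianPart J) := grank_inf_ker_snd_le J
      _ ≤ Module.finrank ℤ (abelianPart K) := hL
      _ ≤ grank K := finrank_abelianPart_le_grank K
  · have hK₀ : K.map π ≠ ⊥ := fun h => hJ₀ (le_bot_iff.mp (h ▸ map_mono hJK))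
    calc grank J ≤ grank (J ⊓ π.ker) + 1 := grank_le_grank_inf_ker_add_one J π hJ
      _ ≤ Module.finrank ℤ (abelianPart J) + 1 := by gcongr; exact grank_inf_ker_snd_le J
      _ ≤ Module.finrank ℤ (abelianPart K) + 1 := by gcongr
      _ ≤ grank K := finrank_abelianPart_add_one_le_grank K hK₀

lemma erat_le_one {a b : ℕ∞} (h : a ≤ b) : erat a b ≤ 1 := by
  rw [erat]
  split_ifs
  · exact le_rfl
  · exact ENNReal.div_le_of_le_mul (by rw [one_mul]; exact_mod_cast h)

lemma erat_self {a : ℕ∞} (ha : a ≠ ⊤) : erat a a = 1 := by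
  rw [erat]
  split_ifs with h
  · rfl
  · exact ENNReal.div_self (by exact_mod_cast fun h' => h ⟨h', h'⟩) (by exact_mod_cast ha)

theorem inert_of_proj_rank_le_one {m n : ℕ}
    (H : Subgroup (Multiplicative (Fin m → ℤ) × FreeGroup (Fin n))) (hH : H.FG)
    (h1 : grank (H.map (MonoidHom.snd (Multiplicative (Fin m → ℤ)) (FreeGroup (Fin n)))) ≤ 1) :
    (∀ K : Subgroup (Multiplicative (Fin m → ℤ) × FreeGroup (Fin n)),
      grank (H ⊓ K) ≤ grank K) ∧ di H = 1 := by
  have := isCyclic_of_grank_le_one h1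
  have inert : ∀ K, grank (H ⊓ K) ≤ grank K := fun K =>
    grank_le_of_le_of_isCyclic_map_snd inf_le_right (isCyclic_of_le (map_mono inf_le_left))
  refine ⟨inert, le_antisymm (iSup₂_le fun K _ => erat_le_one (tsub_le_tsub_right (inert K) 1)) ?_⟩
  have hrrank : rrank H ≠ ⊤ := ne_top_of_le_ne_top (grank_ne_top_of_fg hH) tsub_le_self
  calc (1 : ENNReal) = erat (rrank (H ⊓ H)) (rrank H) := by rw [inf_idem, erat_self hrrank]
    _ ≤ di H := le_iSup₂_of_le H ⟨hH, by rwa [inf_idem]⟩ le_rfl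
end
end

section
/- Let A ∈ M_{r×m}(ℤ), B ∈ M_{s×m}(ℤ), U ∈ M_{r×p}(ℤ), and let B' ∈ M_{s'×m}(ℤ) be such that row(B) is a finite index subgroup of row(B'). Then d(A, B, U) = d(A, B', U), where d(A, B, U) is the minimum rank of a subgroup L ≤ ℤ^m such that row(B) ≤ L and there exists C ∈ M_{p×m}(ℤ) with row(A − UC) ≤ L. -/
noncomputable section

/-- The subgroup of ℤ^m generated by the rows of an integer matrix. -/
def rowSpan {k m : ℕ} (M : Matrix (Fin k) (Fin m) ℤ) : Submodule ℤ (Fin m → ℤ) :=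
  Submodule.span ℤ (Set.range M)

/-- d(A,B,U): the minimum rank of a subgroup L ≤ ℤ^m with row(B) ≤ L and
row(A − UC) ≤ L for some integer matrix C. -/
def dABU {r s p m : ℕ} (A : Matrix (Fin r) (Fin m) ℤ) (B : Matrix (Fin s) (Fin m) ℤ)
    (U : Matrix (Fin r) (Fin p) ℤ) : ℕ :=
  sInf {k : ℕ | ∃ (L : Submodule ℤ (Fin m → ℤ)) (C : Matrix (Fin p) (Fin m) ℤ),
    rowSpan B ≤ L ∧ rowSpan (A - U * C) ≤ L ∧ Module.finrank ℤ L = k}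

/-! Enlarging `B` to `B'` can only raise `d`. Conversely, if `L` is optimal for `B`, then
`L ⊔ row(B')` is admissible for `B'`, and `L` has finite index in it (its index divides
`[row(B') : row(B)]` because `row(B) ≤ L`), so both have the same rank. -/

open Module

namespace AddSubgroup

variable {G : Type*} [AddCommGroup G]

theorem relIndex_sup_ne_zero_of_le {H K L : AddSubgroup G} (hHL : H ≤ L)
    (hHK : H.relIndex K ≠ 0) : L.relIndex (L ⊔ K) ≠ 0 := by
  rw [relIndex_sup_left]
  exact fun h => hHK (Nat.eq_zero_of_zero_dvd (h ▸ relIndex_dvd_of_le_left K hHL))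

end AddSubgroup

namespace Submodule

variable {M : Type*} [AddCommGroup M] [Module.Finite ℤ M] [IsTorsionFree ℤ M]

theorem finrank_sup_eq_of_relIndex_ne_zero {N L K : Submodule ℤ M} (hNL : N ≤ L)
    (hNK : N.toAddSubgroup.relIndex K.toAddSubgroup ≠ 0) :
    finrank ℤ ↥(L ⊔ K) = finrank ℤ L := by
  have : Module.Finite ℤ (L ⊔ K).toAddSubgroup := inferInstanceAs (Module.Finite ℤ ↥(L ⊔ K))
  have : IsTorsionFree ℤ (L ⊔ K).toAddSubgroup := inferInstanceAs (IsTorsionFree ℤ ↥(L ⊔ K))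
  have : L.toAddSubgroup.IsFiniteRelIndex (L ⊔ K).toAddSubgroup := by
    rw [sup_toAddSubgroup]
    exact ⟨AddSubgroup.relIndex_sup_ne_zero_of_le (toAddSubgroup_mono hNL) hNK⟩
  exact (AddSubgroup.finrank_eq_of_isFiniteRelIndex
    (toAddSubgroup_mono le_sup_left : L.toAddSubgroup ≤ (L ⊔ K).toAddSubgroup)).symm

end Submodule

section

variable {r s s' p m : ℕ} {A : Matrix (Fin r) (Fin m) ℤ} {B : Matrix (Fin s) (Fin m) ℤ}
  {U : Matrix (Fin r) (Fin p) ℤ}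

theorem dABU_le {L : Submodule ℤ (Fin m → ℤ)} {C : Matrix (Fin p) (Fin m) ℤ}
    (hB : rowSpan B ≤ L) (hA : rowSpan (A - U * C) ≤ L) : dABU A B U ≤ finrank ℤ L :=
  Nat.sInf_le ⟨L, C, hB, hA, rfl⟩

theorem exists_finrank_eq_dABU (A : Matrix (Fin r) (Fin m) ℤ) (B : Matrix (Fin s) (Fin m) ℤ)
    (U : Matrix (Fin r) (Fin p) ℤ) :
    ∃ (L : Submodule ℤ (Fin m → ℤ)) (C : Matrix (Fin p) (Fin m) ℤ),
      rowSpan B ≤ L ∧ rowSpan (A - U * C) ≤ L ∧ finrank ℤ L = dABU A B U :=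
  Nat.sInf_mem (s := {k | ∃ (L : Submodule ℤ (Fin m → ℤ)) (C : Matrix (Fin p) (Fin m) ℤ),
    rowSpan B ≤ L ∧ rowSpan (A - U * C) ≤ L ∧ finrank ℤ L = k}) ⟨_, ⊤, 0, le_top, le_top, rfl⟩

theorem dABU_mono {B' : Matrix (Fin s') (Fin m) ℤ} (hle : rowSpan B ≤ rowSpan B') :
    dABU A B U ≤ dABU A B' U := by
  obtain ⟨L, C, hB', hA, hL⟩ := exists_finrank_eq_dABU A B' U
  exact hL ▸ dABU_le (hle.trans hB') hA

end

theorem dABU_eq_of_finite_index {r s s' p m : ℕ}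
    (A : Matrix (Fin r) (Fin m) ℤ) (B : Matrix (Fin s) (Fin m) ℤ)
    (U : Matrix (Fin r) (Fin p) ℤ) (B' : Matrix (Fin s') (Fin m) ℤ)
    (hle : rowSpan B ≤ rowSpan B')
    (hfi : (rowSpan B).toAddSubgroup.relIndex (rowSpan B').toAddSubgroup ≠ 0) :
    dABU A B U = dABU A B' U := by
  refine le_antisymm (dABU_mono hle) ?_
  obtain ⟨L, C, hB, hA, hL⟩ := exists_finrank_eq_dABU A B U
  calc dABU A B' U ≤ finrank ℤ ↥(L ⊔ rowSpan B') := dABU_le le_sup_right (hA.trans le_sup_left)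
    _ = dABU A B U := by rw [Submodule.finrank_sup_eq_of_relIndex_ne_zero hB hfi, hL]
end
end
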